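/- arXiv:1507.04464 — 5 statements merged into one kernel-verified Lean document; each statement's English description precedes it below -/
import Mathlib

section
/- With the setup of the two-signal subproblem (g_1 strictly increasing, g_2 strictly decreasing on the interval, crossing at α*): for every ά ∈ (α*, 1/2^{r_1} − c) there exists ᾰ ∈ ((2^{r_2}-1)c, α*] such that g_2(ᾰ) = g_1(ά) and g_1(ᾰ) < g_1(ά). That is, choosing ᾰ achieves the same decoding threshold for the second signal as ά does, while strictly lowering the threshold of the first signal. -/
open Set

/-- For any power factor above the crossing point, a power factor at or below the
crossing point achieves the same threshold for the second signal while strictly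
lowering the threshold of the first signal. -/
theorem stmt_2 (r₁ r₂ c : ℝ) (hr₁ : 0 < r₁) (hr₂ : 0 < r₂)
    (hc0 : 0 ≤ c) (hc1 : c < 1 / (2:ℝ) ^ r₁)
    (g₁ g₂ : ℝ → ℝ)
    (hg₁ : g₁ = fun α => ((2:ℝ) ^ r₁ - 1) / ((1 - c - α) - ((2:ℝ) ^ r₁ - 1) * (α + c)))
    (hg₂ : g₂ = fun α => ((2:ℝ) ^ r₂ - 1) / (α - ((2:ℝ) ^ r₂ - 1) * c))
    (αs : ℝ) (hαs : αs ∈ Ioo (((2:ℝ) ^ r₂ - 1) * c) (1 / (2:ℝ) ^ r₁ - c))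
    (hcross : g₁ αs = g₂ αs) :
    ∀ α' ∈ Ioo αs (1 / (2:ℝ) ^ r₁ - c),
      ∃ α'' ∈ Ioc (((2:ℝ) ^ r₂ - 1) * c) αs,
        g₂ α'' = g₁ α' ∧ g₁ α'' < g₁ α' := by
  obtain ⟨hαs1, hαs2⟩ := hαs
  intro α' hα'
  obtain ⟨hα'1, hα'2⟩ := hα'
  set Q : ℝ := (2:ℝ) ^ r₁ with hQdef
  set K : ℝ := (2:ℝ) ^ r₂ - 1 with hKdef
  have hQ1 : (1:ℝ) < Q := by
    rw [hQdef]
    exact Real.one_lt_rpow_iff_of_pos (by norm_num) |>.mpr (Or.inl ⟨by norm_num, hr₁⟩)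
  have hQ0 : (0:ℝ) < Q := lt_trans one_pos hQ1
  have hK0 : (0:ℝ) < K := by
    have : (1:ℝ) < (2:ℝ) ^ r₂ :=
      Real.one_lt_rpow_iff_of_pos (by norm_num) |>.mpr (Or.inl ⟨by norm_num, hr₂⟩)
    simp [hKdef]; linarith
  set B : ℝ := 1 / Q - c with hBdef
  -- rewrite g₁ denominators
  have hden : ∀ α : ℝ, (1 - c - α) - (Q - 1) * (α + c) = Q * (B - α) := by
    intro α
    rw [hBdef]; field_simp; ring
  have hg₁' : ∀ α : ℝ, g₁ α = (Q - 1) / (Q * (B - α)) := by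
    intro α; rw [hg₁]; simp only []; rw [hden α]
  have hα'B : α' < B := hα'2
  have hαsB : αs < B := lt_trans hα'1 hα'B
  have hd' : 0 < Q * (B - α') := mul_pos hQ0 (by linarith)
  have hds : 0 < Q * (B - αs) := mul_pos hQ0 (by linarith)
  have hv0 : 0 < g₁ α' := by rw [hg₁']; exact div_pos (by linarith) hd'
  -- g₁ αs < g₁ α'
  have hmono : g₁ αs < g₁ α' := by
    rw [hg₁' αs, hg₁' α']
    apply div_lt_div_of_pos_left (by linarith) hd'
    have : B - α' < B - αs := by linarith
    exact (mul_lt_mul_iff_right₀ hQ0).mpr this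
  -- g₂ αs = g₁ αs
  have hαsK : 0 < αs - K * c := by linarith
  have hg₂s : g₂ αs = K / (αs - K * c) := by rw [hg₂]
  have hg₂lt : K / (αs - K * c) < g₁ α' := by
    rw [← hg₂s, ← hcross]; exact hmono
  set v : ℝ := g₁ α' with hvdef
  set α'' : ℝ := K / v + K * c with hα''def
  have hKv : 0 < K / v := div_pos hK0 hv0
  -- K/v < αs - K*c
  have hkey : K / v < αs - K * c := by
    rw [div_lt_iff₀ hv0]
    have := (div_lt_iff₀ hαsK).mp hg₂lt
    nlinarith
  have hin1 : K * c < α'' := by rw [hα''def]; linarith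
  have hin2 : α'' ≤ αs := by rw [hα''def]; linarith
  refine ⟨α'', ⟨hin1, hin2⟩, ?_, ?_⟩
  · rw [hg₂]
    simp only []
    rw [hα''def]
    have : K / v + K * c - K * c = K / v := by ring
    rw [this]
    field_simp
  · have hveq : v = (Q - 1) / (Q * (B - α')) := hg₁' α'
    rw [hg₁' α'', hveq]
    apply div_lt_div_of_pos_left (by linarith) hd'
    have hα''α' : α'' < α' := lt_of_le_of_lt hin2 hα'1
    have : B - α' < B - α'' := by linarith
    exact (mul_lt_mul_iff_right₀ hQ0).mpr this
end

section
/- Let Γ_1, Γ_2, w_1, w_2 > 0 with Γ_1/w_1 > Γ_2/w_2, and let 0 < a ≤ b be thresholds. Then min(e^{−b/(Γ_1/w_1)}, e^{−a/(Γ_2/w_2)}) ≥ min(e^{−a/(Γ_1/w_1)}, e^{−b/(Γ_2/w_2)}). -/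
open Real

/-- Swapping the decoding thresholds so that the user with smaller weighted average
channel gain gets the smaller threshold does not decrease the minimum weighted
success probability. -/
theorem stmt_4 (Γ₁ Γ₂ w₁ w₂ a b : ℝ)
    (hΓ₁ : 0 < Γ₁) (hΓ₂ : 0 < Γ₂) (hw₁ : 0 < w₁) (hw₂ : 0 < w₂)
    (horder : Γ₂ / w₂ < Γ₁ / w₁) (ha : 0 < a) (hab : a ≤ b) :
    min (exp (-(a / (Γ₁ / w₁)))) (exp (-(b / (Γ₂ / w₂)))) ≤
      min (exp (-(b / (Γ₁ / w₁)))) (exp (-(a / (Γ₂ / w₂)))) := by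
  have hg2 : 0 < Γ₂ / w₂ := div_pos hΓ₂ hw₂
  have hg1 : 0 < Γ₁ / w₁ := lt_trans hg2 horder
  have hb : 0 < b := ha.trans_le hab
  refine le_trans (min_le_right _ _) (le_min ?_ ?_) <;> apply exp_le_exp.2 <;>
      apply neg_le_neg
  · exact div_le_div_of_nonneg_left hb.le hg2 horder.le
  · gcongr
end

section
/- Let K ≥ 2, r_k > 0, and Γ_k/w_k > 0 for k ∈ {1,…,K}. Suppose α = (α_1,…,α_K) satisfies α_k > (2^{r_k}−1)Σ_{j>k}α_j for all k, Σ_k α_k = 1, and the thresholds γ_th^k = (2^{r_k}−1)/(α_k − (2^{r_k}−1)Σ_{j>k}α_j) satisfy γ_th^1 ≤ γ_th^2 ≤ … ≤ γ_th^K. If the values γ_th^k/(Γ_k/w_k) are not all equal, then α is not a minimizer of max_k γ_th^k/(Γ_k/w_k) over the feasible set: there exists another feasible α' with strictly smaller maximum. -/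
/-!
With `c k = 2 ^ r k - 1`, the denominators `e k = α k - c k * ∑_{j>k} α j` of the thresholds
`γ_th k = c k / e k` are the image of `α` under a unitriangular matrix, so any positive `e` is
attained, and the total power is the positive combination `∑ k, w k * e k` with
`w k = ∏_{i<k} 2 ^ r i`. Prescribing `e k = c k / (B * v k)` with `B = ∑ k, w k * c k / v k`
gives a feasible allocation all of whose ratios `γ_th k / v k` equal `B`. If `t` is the largest
ratio at `α`, then `e k ≥ c k / (t * v k)`, strictly for some `k` unless all ratios equal `t`, so
`1 = ∑ k, w k * e k > B / t`.
-/

open Finset Matrix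

lemma exists_lt_sup'_of_not_forall_eq {ι β : Type*} [LinearOrder β] {s : Finset ι}
    (hs : s.Nonempty) {f : ι → β} (h : ¬ ∀ k ∈ s, ∀ l ∈ s, f k = f l) :
    ∃ k ∈ s, f k < s.sup' hs f := by
  by_contra! hge
  exact h fun k hk l hl => (le_antisymm (le_sup' f hk) (hge k hk)).trans
    (le_antisymm (le_sup' f hl) (hge l hl)).symm

variable {ι R : Type*} [Fintype ι] [LinearOrder ι]

section CommRing

variable [CommRing R]

def excess (c α : ι → R) (k : ι) : R :=
  α k - c k * ∑ j ∈ univ.filter (fun j => k < j), α j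

def excessMatrix (c : ι → R) : Matrix ι ι R :=
  1 - of fun k j => if k < j then c k else 0

lemma excessMatrix_mulVec (c α : ι → R) : excessMatrix c *ᵥ α = excess c α := by
  rw [excessMatrix, sub_mulVec, one_mulVec]
  ext k
  simp [excess, mulVec, dotProduct, sum_filter, mul_sum]

lemma det_excessMatrix (c : ι → R) : (excessMatrix c).det = 1 := by
  rw [det_of_isUpperTriangular]
  · simp [excessMatrix]
  · intro i j (hji : j < i)
    simp [excessMatrix, one_apply_ne hji.ne', hji.not_gt]

lemma excess_surjective (c : ι → R) : Function.Surjective (excess c) := fun d =>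
  ⟨(excessMatrix c)⁻¹ *ᵥ d, by
    rw [← excessMatrix_mulVec, mulVec_mulVec,
      mul_nonsing_inv _ (by simp [det_excessMatrix]), one_mulVec]⟩

lemma excess_smul (c α : ι → R) (a : R) : excess c (a • α) = a • excess c α := by
  ext k
  simp only [excess, Pi.smul_apply, smul_eq_mul, ← mul_sum]
  ring

def weight (c : ι → R) (k : ι) : R :=
  ∏ i ∈ univ.filter (fun i => i < k), (1 + c i)

lemma weight_eq_one_add_sum (c : ι → R) (j : ι) :
    weight c j = 1 + ∑ k ∈ univ.filter (fun k => k < j), c k * weight c k := by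
  rw [weight, prod_one_add_ordered]
  congr 1
  refine sum_congr rfl fun k hk => ?_
  rw [weight, filter_filter]
  congr 2
  ext i
  simp only [mem_filter, mem_univ, true_and] at hk ⊢
  exact ⟨fun h => h.2, fun h => ⟨h.trans hk, h⟩⟩

lemma sum_eq_sum_weight_mul_excess (c α : ι → R) :
    ∑ k, α k = ∑ k, weight c k * excess c α k := by
  have hswap : ∑ k, weight c k * (c k * ∑ j ∈ univ.filter (fun j => k < j), α j)
      = ∑ j, (∑ k ∈ univ.filter (fun k => k < j), c k * weight c k) * α j := by
    simp only [mul_sum, sum_mul, sum_filter]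
    rw [sum_comm]
    refine sum_congr rfl fun j _ => sum_congr rfl fun k _ => ?_
    split_ifs <;> ring
  simp only [excess, mul_sub, sum_sub_distrib, hswap]
  conv_rhs => enter [1, 2, k]; rw [weight_eq_one_add_sum]
  simp only [add_mul, one_mul, sum_add_distrib, add_sub_cancel_right]

end CommRing

section Field

variable [Field R]

def threshold (c α : ι → R) (k : ι) : R := c k / excess c α k

def balancedValue (c v : ι → R) : R := ∑ k, weight c k * (c k / v k)

end Field

section Positive

variable [Field R] [LinearOrder R] [IsStrictOrderedRing R]

lemma weight_pos {c : ι → R} (hc : ∀ k, 0 ≤ c k) (k : ι) : 0 < weight c k :=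
  prod_pos fun i _ => by linarith [hc i]

variable {c v : ι → R} (hc : ∀ k, 0 < c k) (hv : ∀ k, 0 < v k)
include hc hv

lemma balancedValue_pos [Nonempty ι] : 0 < balancedValue c v :=
  sum_pos (fun k _ => mul_pos (weight_pos (fun k => (hc k).le) k) (div_pos (hc k) (hv k)))
    univ_nonempty

lemma exists_threshold_eq_balancedValue_mul [Nonempty ι] :
    ∃ α, (∀ k, 0 < excess c α k) ∧ ∑ k, α k = 1 ∧
      ∀ k, threshold c α k = balancedValue c v * v k := by
  obtain ⟨β, hβ⟩ := excess_surjective c fun k => c k / v k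
  have hsum : ∑ k, β k = balancedValue c v := by
    rw [sum_eq_sum_weight_mul_excess c, hβ, balancedValue]
  have hB := balancedValue_pos hc hv
  have hexcess :
      excess c ((balancedValue c v)⁻¹ • β) = fun k => c k / v k / balancedValue c v := by
    rw [excess_smul, hβ]
    ext k
    simp [div_eq_inv_mul, mul_comm]
  refine ⟨(balancedValue c v)⁻¹ • β, fun k => ?_, ?_, fun k => ?_⟩
  · rw [hexcess]
    exact div_pos (div_pos (hc k) (hv k)) hB
  · simp only [Pi.smul_apply, smul_eq_mul, ← mul_sum, hsum, inv_mul_cancel₀ hB.ne']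
  · rw [threshold, hexcess]
    field_simp [(hc k).ne', (hv k).ne']

lemma balancedValue_lt {α : ι → R} {t : R} (hpos : ∀ k, 0 < excess c α k)
    (hsum : ∑ k, α k = 1)
    (hle : ∀ k, threshold c α k / v k ≤ t) (hlt : ∃ k, threshold c α k / v k < t) :
    balancedValue c v < t := by
  have hthr : ∀ k, 0 < threshold c α k := fun k => div_pos (hc k) (hpos k)
  obtain ⟨k₀, hk₀⟩ := hlt
  have ht : 0 < t := (div_pos (hthr k₀) (hv k₀)).trans hk₀
  have hcmp : ∀ k, threshold c α k ≤ t * v k := fun k => (div_le_iff₀ (hv k)).1 (hle k)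
  suffices balancedValue c v / t < 1 from (div_lt_one ht).1 this
  calc balancedValue c v / t = ∑ k, weight c k * (c k / (t * v k)) := by
        rw [balancedValue, sum_div]
        refine sum_congr rfl fun k _ => ?_
        rw [mul_div_assoc, div_div, mul_comm (v k)]
    _ < ∑ k, weight c k * (c k / threshold c α k) := by
        refine sum_lt_sum (fun k _ => ?_) ⟨k₀, mem_univ _, ?_⟩
        · exact mul_le_mul_of_nonneg_left (div_le_div_of_nonneg_left (hc k).le (hthr k) (hcmp k))
            (weight_pos (fun k => (hc k).le) k).le
        · exact mul_lt_mul_of_pos_left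
            (div_lt_div_of_pos_left (hc k₀) (hthr k₀) ((div_lt_iff₀ (hv k₀)).1 hk₀))
            (weight_pos (fun k => (hc k).le) k₀)
    _ = 1 := by
        simp only [threshold, div_div_cancel₀ (hc _).ne', ← sum_eq_sum_weight_mul_excess, hsum]

end Positive

theorem stmt_6_general (K : ℕ) (hne : (univ : Finset (Fin K)).Nonempty)
    (r v : Fin K → ℝ) (hr : ∀ k, 0 < r k) (hv : ∀ k, 0 < v k) (hvmono : Monotone v)
    (γth : (Fin K → ℝ) → Fin K → ℝ)
    (hγth : ∀ α k, γth α k = ((2:ℝ) ^ (r k) - 1) /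
        (α k - ((2:ℝ) ^ (r k) - 1) * ∑ j ∈ univ.filter (fun j => k < j), α j))
    (Feasible : (Fin K → ℝ) → Prop)
    (hFeas : ∀ α, Feasible α ↔
      (∀ k, ((2:ℝ) ^ (r k) - 1) * (∑ j ∈ univ.filter (fun j => k < j), α j) < α k) ∧
      (∑ k, α k = 1) ∧
      (∀ k l : Fin K, k ≤ l → γth α k ≤ γth α l))
    (α : Fin K → ℝ) (hα : Feasible α)
    (hnoteq : ¬ ∀ k l : Fin K, γth α k / v k = γth α l / v l) :
    ∃ α', Feasible α' ∧
      univ.sup' hne (fun k => γth α' k / v k) < univ.sup' hne (fun k => γth α k / v k) := by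
  set c : Fin K → ℝ := fun k => (2:ℝ) ^ (r k) - 1
  have hc : ∀ k, 0 < c k := fun k => sub_pos.2 (Real.one_lt_rpow one_lt_two (hr k))
  obtain rfl : γth = threshold c := funext₂ hγth
  have : Nonempty (Fin K) := hne.to_subtype.map Subtype.val
  obtain ⟨hαpos, hαsum, -⟩ := (hFeas α).1 hα
  obtain ⟨α', hpos', hsum', hthr'⟩ := exists_threshold_eq_balancedValue_mul hc hv
  have hB := balancedValue_pos hc hv
  have hfeas' : Feasible α' := (hFeas α').2 ⟨fun k => sub_pos.1 (hpos' k), hsum',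
    fun k l hkl => by simpa only [hthr'] using mul_le_mul_of_nonneg_left (hvmono hkl) hB.le⟩
  have hsup' : univ.sup' hne (fun k => threshold c α' k / v k) = balancedValue c v := by
    simp only [hthr', mul_div_cancel_right₀ _ (hv _).ne', sup'_const]
  refine ⟨α', hfeas', hsup'.symm ▸ balancedValue_lt hc hv (fun k => sub_pos.2 (hαpos k))
    hαsum (fun k => le_sup' (fun k => threshold c α k / v k) (mem_univ k)) ?_⟩
  obtain ⟨k, -, hk⟩ := exists_lt_sup'_of_not_forall_eq hne (by simpa using hnoteq)
  exact ⟨k, hk⟩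

/-- Proposition 2: if the weighted thresholds are not all equal at a feasible power
allocation, then that allocation is not a minimizer of the maximum weighted threshold. -/
theorem stmt_6 (K : ℕ) (hK : 2 ≤ K) (hne : (univ : Finset (Fin K)).Nonempty)
    (r v : Fin K → ℝ) (hr : ∀ k, 0 < r k) (hv : ∀ k, 0 < v k) (hvmono : Monotone v)
    (γth : (Fin K → ℝ) → Fin K → ℝ)
    (hγth : ∀ α k, γth α k = ((2:ℝ) ^ (r k) - 1) /
        (α k - ((2:ℝ) ^ (r k) - 1) * ∑ j ∈ univ.filter (fun j => k < j), α j))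
    (Feasible : (Fin K → ℝ) → Prop)
    (hFeas : ∀ α, Feasible α ↔
      (∀ k, ((2:ℝ) ^ (r k) - 1) * (∑ j ∈ univ.filter (fun j => k < j), α j) < α k) ∧
      (∑ k, α k = 1) ∧
      (∀ k l : Fin K, k ≤ l → γth α k ≤ γth α l))
    (α : Fin K → ℝ) (hα : Feasible α)
    (hnoteq : ¬ ∀ k l : Fin K, γth α k / v k = γth α l / v l) :
    ∃ α', Feasible α' ∧
      univ.sup' hne (fun k => γth α' k / v k) < univ.sup' hne (fun k => γth α k / v k) :=
  stmt_6_general K hne r v hr hv hvmono γth hγth Feasible hFeas α hα hnoteq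
end

section
/- Let L ≥ 1, rates R_1,…,R_L > 0, and positive coefficients c_1 ≥ c_2 ≥ … ≥ c_L > 0 (c_l = w_l/Γ_l). Define f(t) = t·[ c_1(2^{R_1/t} − 1) + Σ_{l=2}^L c_l(2^{R_l/t} − 1)·2^{Σ_{j=1}^{l−1} R_j/t} ] for t > 0. Then f is strictly convex on (0, ∞). -/
open Real Set Finset

/-!
Telescoping the powers of two, the `l`-th summand of `f` is
`c_l · t (2^{(S_l + R_l)/t} - 2^{S_l/t})` with `S_l = R_1 + ⋯ + R_{l-1}`.
For `0 ≤ q < p` the function `t ↦ t (e^{p/t} - e^{q/t})` has second derivative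
`(p² e^{p/t} - q² e^{q/t}) / t³ > 0` on `(0, ∞)`, so every summand is strictly convex,
and so is their (nonempty) sum.
-/

section

variable {𝕜 E β : Type*} [PartialOrder 𝕜] [AddCommMonoid E] [AddCommMonoid β] [PartialOrder β]

theorem StrictConvexOn.smul [CommSemiring 𝕜] [SMul 𝕜 E] [Module 𝕜 β] [PosSMulStrictMono 𝕜 β]
    {s : Set E} {f : E → β} {c : 𝕜} (hc : 0 < c) (hf : StrictConvexOn 𝕜 s f) :
    StrictConvexOn 𝕜 s fun x => c • f x :=
  ⟨hf.1, fun x hx y hy hxy a b ha hb hab =>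
    calc
      c • f (a • x + b • y) < c • (a • f x + b • f y) :=
        smul_lt_smul_of_pos_left (hf.2 hx hy hxy ha hb hab) hc
      _ = a • c • f x + b • c • f y := by rw [smul_add, smul_comm c, smul_comm c]⟩

theorem StrictConvexOn.sum [Semiring 𝕜] [SMul 𝕜 E] [IsOrderedCancelAddMonoid β]
    [DistribMulAction 𝕜 β] {s : Set E} {ι : Type*} {t : Finset ι} (ht : t.Nonempty) {f : ι → E → β}
    (hf : ∀ i ∈ t, StrictConvexOn 𝕜 s (f i)) :
    StrictConvexOn 𝕜 s fun x => ∑ i ∈ t, f i x := by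
  induction ht using Finset.Nonempty.cons_induction with
  | singleton i => simpa using hf i (mem_singleton_self i)
  | cons i t hi ht ih =>
    simp only [sum_cons]
    exact (hf i (mem_cons_self i t)).add (ih fun j hj => hf j (mem_cons_of_mem hj))

end

theorem hasDerivAt_const_div (p : ℝ) {t : ℝ} (ht : t ≠ 0) :
    HasDerivAt (fun t => p / t) (-(p / t ^ 2)) t := by
  simpa [div_eq_mul_inv, mul_comm] using (hasDerivAt_inv ht).const_mul p

theorem hasDerivAt_mul_exp_div (p : ℝ) {t : ℝ} (ht : t ≠ 0) :
    HasDerivAt (fun t => t * exp (p / t)) (exp (p / t) * (1 - p / t)) t := by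
  refine ((hasDerivAt_id t).fun_mul (hasDerivAt_const_div p ht).exp).congr_deriv ?_
  simp only [id_eq]
  field_simp
  ring

theorem hasDerivAt_exp_div_mul_one_sub_div (p : ℝ) {t : ℝ} (ht : t ≠ 0) :
    HasDerivAt (fun t => exp (p / t) * (1 - p / t)) (exp (p / t) * p ^ 2 / t ^ 3) t := by
  have hdiv := hasDerivAt_const_div p ht
  refine (hdiv.exp.fun_mul (hdiv.const_sub 1)).congr_deriv ?_
  field_simp
  ring

theorem deriv2_mul_exp_div_sub_exp_div (p q : ℝ) {x : ℝ} (hx : x ≠ 0) :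
    deriv^[2] (fun t => t * exp (p / t) - t * exp (q / t)) x
      = (exp (p / x) * p ^ 2 - exp (q / x) * q ^ 2) / x ^ 3 := by
  have hderiv : deriv (fun t => t * exp (p / t) - t * exp (q / t)) =ᶠ[nhds x]
      fun t => exp (p / t) * (1 - p / t) - exp (q / t) * (1 - q / t) := by
    filter_upwards [compl_singleton_mem_nhds hx] with t ht
    exact ((hasDerivAt_mul_exp_div p ht).sub (hasDerivAt_mul_exp_div q ht)).deriv
  rw [Function.iterate_succ_apply, Function.iterate_one, hderiv.deriv_eq,
    ((hasDerivAt_exp_div_mul_one_sub_div p hx).fun_sub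
      (hasDerivAt_exp_div_mul_one_sub_div q hx)).deriv, sub_div]

theorem strictConvexOn_mul_exp_div_sub_exp_div {p q : ℝ} (hq : 0 ≤ q) (hqp : q < p) :
    StrictConvexOn ℝ (Ioi 0) fun t => t * exp (p / t) - t * exp (q / t) := by
  refine strictConvexOn_of_deriv2_pos (convex_Ioi 0) ?_ fun x hx => ?_
  · fun_prop (disch := exact fun t ht => ne_of_gt ht)
  · rw [interior_Ioi] at hx
    rw [deriv2_mul_exp_div_sub_exp_div p q (ne_of_gt hx)]
    have hexp : exp (q / x) < exp (p / x) := exp_lt_exp.2 (by gcongr)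
    have hsq : q ^ 2 < p ^ 2 := by gcongr
    have hexp_pos := exp_pos (q / x)
    have : exp (q / x) * q ^ 2 < exp (p / x) * p ^ 2 := by gcongr
    exact div_pos (sub_pos.2 this) (pow_pos hx 3)

theorem strictConvexOn_mul_rpow_div_sub_rpow_div {b p q : ℝ} (hb : 1 < b) (hq : 0 ≤ q)
    (hqp : q < p) : StrictConvexOn ℝ (Ioi 0) fun t => t * (b ^ (p / t) - b ^ (q / t)) := by
  have hlog := log_pos hb
  refine (strictConvexOn_mul_exp_div_sub_exp_div (mul_nonneg hlog.le hq)
    (mul_lt_mul_of_pos_left hqp hlog)).congr fun t _ => ?_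
  simp only [rpow_def_of_pos (zero_lt_one.trans hb), mul_div_assoc, mul_sub]

theorem stmt_9_general (L : ℕ) (hL : 1 ≤ L) (R c : ℕ → ℝ)
    (hR : ∀ l < L, 0 < R l) (hc : ∀ l < L, 0 < c l) :
    StrictConvexOn ℝ (Ioi 0)
      (fun t : ℝ => t * ∑ l ∈ range L,
        c l * ((2:ℝ) ^ (R l / t) - 1) * (2:ℝ) ^ ((∑ j ∈ range l, R j) / t)) := by
  have hterm : ∀ l < L, StrictConvexOn ℝ (Ioi 0) fun t => c l • (t *
      ((2:ℝ) ^ ((∑ j ∈ range l, R j + R l) / t) - (2:ℝ) ^ ((∑ j ∈ range l, R j) / t))) :=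
    fun l hl => (strictConvexOn_mul_rpow_div_sub_rpow_div one_lt_two
      (sum_nonneg fun j hj => (hR j ((mem_range.1 hj).trans hl)).le)
      (lt_add_of_pos_right _ (hR l hl))).smul (hc l hl)
  refine (StrictConvexOn.sum (nonempty_range_iff.2 (by omega))
    fun l hl => hterm l (mem_range.1 hl)).congr fun t _ => ?_
  simp only [smul_eq_mul, mul_sum, add_div, rpow_add two_pos]
  exact sum_congr rfl fun l _ => by ring

/-- The per-group resource-allocation cost `f_g` is strictly convex on `(0, ∞)`. -/
theorem stmt_9 (L : ℕ) (hL : 1 ≤ L) (R c : ℕ → ℝ)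
    (hR : ∀ l < L, 0 < R l) (hc : ∀ l < L, 0 < c l)
    (hmono : ∀ l, l + 1 < L → c (l + 1) ≤ c l) :
    StrictConvexOn ℝ (Ioi 0)
      (fun t : ℝ => t * ∑ l ∈ range L,
        c l * ((2:ℝ) ^ (R l / t) - 1) * (2:ℝ) ^ ((∑ j ∈ range l, R j) / t)) :=
  stmt_9_general L hL R c hR hc
end

section
/- Let K ≥ 2 and c_k > 0, b_k > 1 for all k with c_1 ≥ c_2 ≥ … ≥ c_K. Let A(σ) = c_{σ(1)}(b_{σ(1)} − 1) + Σ_{k=2}^K c_{σ(k)}(b_{σ(k)} − 1)∏_{j<k} b_{σ(j)} for a permutation σ of {1,…,K}, where crucially the product rates compose so total ∏ b is permutation-invariant. Then for adjacent transposition: if c_{σ(m)} < c_{σ(m+1)} for some m, swapping positions m and m+1 does not increase A(σ); hence A is minimized by the identity ordering c_1 ≥ … ≥ c_K. -/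
/-!
Swapping the users at adjacent positions `i ⋖ i'` changes the cost by
`P * (b (σ i) - 1) * (b (σ i') - 1) * (c (σ i) - c (σ i'))`, where `P` is the product of the
`b`'s decoded before position `i`: the two users only exchange the factor each contributes to the
other, and all later prefix products are unchanged. This is nonpositive as soon as
`c (σ i) ≤ c (σ i')`, and bubble-sorting any `σ` by such swaps reaches the identity.
-/

open Finset Equiv

section DecodingCost

variable {ι R : Type*} [Fintype ι] [LinearOrder ι]

def decodingCost [CommRing R] (b c : ι → R) (σ : Perm ι) : R :=
  ∑ k, c (σ k) * (b (σ k) - 1) * ∏ j ∈ univ.filter (fun j => j < k), b (σ j)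

theorem prod_filter_lt_of_covBy {M : Type*} [CommMonoid M] {i i' : ι} (hi : i ⋖ i')
    (f : ι → M) :
    ∏ j ∈ univ.filter (fun j => j < i'), f j = f i * ∏ j ∈ univ.filter (fun j => j < i), f j := by
  have : univ.filter (fun j => j < i') = insert i (univ.filter (fun j => j < i)) := by
    ext j
    simp only [mem_filter, mem_univ, true_and, mem_insert, hi.lt_iff_le_left, le_iff_eq_or_lt]
  rw [this, prod_insert (by simp)]

theorem prod_filter_lt_swap_of_ne {M : Type*} [CommMonoid M] {i i' k : ι} (hi : i ⋖ i')
    (hk : k ≠ i') (f : ι → M) :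
    ∏ j ∈ univ.filter (fun j => j < k), f (swap i i' j)
      = ∏ j ∈ univ.filter (fun j => j < k), f j := by
  have hik : i < k ↔ i' < k :=
    ⟨fun h => (hi.ge_of_gt h).lt_of_ne hk.symm, hi.lt.trans⟩
  refine prod_equiv (swap i i') (fun j => ?_) (fun _ _ => rfl)
  simp only [mem_filter, mem_univ, true_and]
  rcases eq_or_ne j i with rfl | hji
  · simpa using hik
  rcases eq_or_ne j i' with rfl | hji'
  · simpa using hik.symm
  rw [swap_apply_of_ne_of_ne hji hji']

theorem decodingCost_mul_swap [CommRing R] (b c : ι → R) (σ : Perm ι) {i i' : ι} (hi : i ⋖ i') :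
    decodingCost b c (σ * swap i i') = decodingCost b c σ +
      (∏ j ∈ univ.filter (fun j => j < i), b (σ j)) *
        (b (σ i) - 1) * (b (σ i') - 1) * (c (σ i) - c (σ i')) := by
  rw [← sub_eq_iff_eq_add', decodingCost, decodingCost, ← sum_sub_distrib,
    sum_eq_add i i' hi.ne ?_ (by simp) (by simp)]
  · simp only [Perm.mul_apply, swap_apply_left, swap_apply_right]
    rw [prod_filter_lt_of_covBy hi, prod_filter_lt_of_covBy hi,
      prod_filter_lt_swap_of_ne hi hi.ne (fun j => b (σ j)), swap_apply_left]
    ring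
  · rintro k - ⟨hki, hki'⟩
    simp only [Perm.mul_apply, swap_apply_of_ne_of_ne hki hki',
      prod_filter_lt_swap_of_ne hi hki' (fun j => b (σ j)), sub_self]

theorem decodingCost_mul_swap_le [CommRing R] [LinearOrder R] [IsStrictOrderedRing R]
    {b c : ι → R} (hb : ∀ k, 1 ≤ b k) {σ : Perm ι} {i i' : ι} (hi : i ⋖ i')
    (hc : c (σ i) ≤ c (σ i')) :
    decodingCost b c (σ * swap i i') ≤ decodingCost b c σ := by
  rw [decodingCost_mul_swap b c σ hi, add_le_iff_nonpos_right]
  refine mul_nonpos_of_nonneg_of_nonpos ?_ (sub_nonpos.2 hc)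
  have hprefix := prod_nonneg fun j (_ : j ∈ univ.filter (fun j => j < i)) =>
    zero_le_one.trans (hb (σ j))
  have hbi := sub_nonneg.2 (hb (σ i))
  have hbi' := sub_nonneg.2 (hb (σ i'))
  positivity

end DecodingCost

section Sorting

variable {K : ℕ}

theorem sum_val_mul_val_lt_mul_swap {σ : Perm (Fin K)} {i i' : Fin K} (hi : i < i')
    (hσ : σ i' < σ i) :
    ∑ k, ((σ k : ℕ) * (k : ℕ) : ℤ) < ∑ k, (((σ * swap i i') k : ℕ) * (k : ℕ) : ℤ) := by
  rw [← sub_pos, ← sum_sub_distrib, sum_eq_add i i' hi.ne ?_ (by simp) (by simp)]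
  · simp only [Perm.mul_apply, swap_apply_left, swap_apply_right]
    rw [Fin.lt_def] at hi hσ
    nlinarith
  · rintro k - ⟨hki, hki'⟩
    simp only [Perm.mul_apply, swap_apply_of_ne_of_ne hki hki', sub_self]

/-- A maximiser of `∑ k, τ k * k` among the permutations `τ` with `f τ ≤ f σ` has no adjacent
descent, so it is the identity. -/
theorem apply_one_le_of_swap_descent_le {α : Type*} [Preorder α] {f : Perm (Fin K) → α}
    (hf : ∀ σ i i', i ⋖ i' → σ i' < σ i → f (σ * swap i i') ≤ f σ) (σ : Perm (Fin K)) :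
    f 1 ≤ f σ := by
  classical
  obtain ⟨τ, hτ, hmax⟩ := (univ.filter fun τ => f τ ≤ f σ).exists_max_image
    (fun τ : Perm (Fin K) => ∑ k, ((τ k : ℕ) * (k : ℕ) : ℤ)) ⟨σ, by simp⟩
  rw [mem_filter] at hτ
  have hmono : Monotone τ := (monotone_iff_forall_covBy τ).2 fun i i' hi => by
    by_contra! hdesc
    have hswap := hmax (τ * swap i i') (mem_filter.2 ⟨mem_univ _, (hf τ i i' hi hdesc).trans hτ.2⟩)
    exact (sum_val_mul_val_lt_mul_swap hi.lt hdesc).not_ge hswap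
  have hτ1 : τ = 1 := Equiv.ext (congrFun (hmono.strictMono_of_injective τ.injective).eq_id)
  exact hτ1 ▸ hτ.2

end Sorting

theorem stmt_19_general (K : ℕ) (b c : Fin K → ℝ)
    (hb : ∀ k, 1 < b k) (hcmono : Antitone c)
    (A : Equiv.Perm (Fin K) → ℝ)
    (hA : ∀ σ, A σ = ∑ k, c (σ k) * (b (σ k) - 1) *
        ∏ j ∈ univ.filter (fun j => j < k), b (σ j)) :
    (∀ (σ : Equiv.Perm (Fin K)) (m : ℕ) (hm : m + 1 < K),
      c (σ ⟨m, Nat.lt_of_succ_lt hm⟩) < c (σ ⟨m + 1, hm⟩) →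
      A (σ * Equiv.swap ⟨m, Nat.lt_of_succ_lt hm⟩ ⟨m + 1, hm⟩) ≤ A σ) ∧
    (∀ σ : Equiv.Perm (Fin K), A 1 ≤ A σ) := by
  obtain rfl : A = decodingCost b c := funext hA
  have hb' : ∀ k, 1 ≤ b k := fun k => (hb k).le
  refine ⟨fun σ m hm hc => ?_, apply_one_le_of_swap_descent_le fun σ i i' hi hσ =>
    decodingCost_mul_swap_le hb' hi (hcmono hσ.le)⟩
  exact decodingCost_mul_swap_le hb' (Fin.covBy_iff.2 (Order.covBy_add_one m)) hc.le

/-- Exchange argument for the decoding order: swapping two adjacent positions so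
that the user with larger coefficient is decoded earlier does not increase the
balanced value `A`; hence `A` is minimized by the decreasing-coefficient (identity)
ordering. -/
theorem stmt_19 (K : ℕ) (hK : 2 ≤ K) (b c : Fin K → ℝ)
    (hb : ∀ k, 1 < b k) (hc : ∀ k, 0 < c k) (hcmono : Antitone c)
    (A : Equiv.Perm (Fin K) → ℝ)
    (hA : ∀ σ, A σ = ∑ k, c (σ k) * (b (σ k) - 1) *
        ∏ j ∈ univ.filter (fun j => j < k), b (σ j)) :
    (∀ (σ : Equiv.Perm (Fin K)) (m : ℕ) (hm : m + 1 < K),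
      c (σ ⟨m, Nat.lt_of_succ_lt hm⟩) < c (σ ⟨m + 1, hm⟩) →
      A (σ * Equiv.swap ⟨m, Nat.lt_of_succ_lt hm⟩ ⟨m + 1, hm⟩) ≤ A σ) ∧
    (∀ σ : Equiv.Perm (Fin K), A 1 ≤ A σ) :=
  stmt_19_general K b c hb hcmono A hA
end
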